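/- Let r ≥ 3 and let K be a complete r-uniform r-partite hypergraph whose edges are colored with k colors. Then the vertex set of K can be covered by at most k monochromatic components. -/

import Mathlib

open Classical

variable {V : Type*}

/-- `e` is an edge of the complete `r`-uniform `r`-partite hypergraph with
partition `part`: it meets every class in exactly one vertex. -/
def IsPartiteEdge {r : ℕ} (part : V → Fin r) (e : Finset V) : Prop :=
  ∀ i : Fin r, (e.filter fun v => part v = i).card = 1

/-- `e` is an edge of the complete `r`-uniform `(r,ℓ)`-partite hypergraph:
an `r`-set meeting every class in at most `ℓ` vertices. -/
def IsRLEdge {r : ℕ} (part : V → Fin r) (ℓ : ℕ) (e : Finset V) : Prop :=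
  e.card = r ∧ ∀ i : Fin r, (e.filter fun v => part v = i).card ≤ ℓ

/-- An edge is friendly if it meets at most one class in exactly `ℓ` vertices. -/
def Friendly {r : ℕ} (part : V → Fin r) (ℓ : ℕ) (e : Finset V) : Prop :=
  (Finset.univ.filter fun i : Fin r => (e.filter fun v => part v = i).card = ℓ).card ≤ 1

/-- `u` and `v` lie in the same monochromatic component of color `c` of the
hypergraph with edge predicate `E` and edge coloring `χ`. -/
def MonoConn {k : ℕ} (E : Finset V → Prop) (χ : Finset V → Fin k) (c : Fin k)
    (u v : V) : Prop :=
  Relation.ReflTransGen (fun a b => ∃ e : Finset V, E e ∧ χ e = c ∧ a ∈ e ∧ b ∈ e) u v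

/-- The coloring `χ` is spanning: every vertex is incident with an edge of every color. -/
def Spanning {k : ℕ} (E : Finset V → Prop) (χ : Finset V → Fin k) : Prop :=
  ∀ v : V, ∀ c : Fin k, ∃ e : Finset V, E e ∧ χ e = c ∧ v ∈ e

/-- The vertex set can be covered by at most `m` monochromatic components. -/
def CoversBy {k : ℕ} (E : Finset V → Prop) (χ : Finset V → Fin k) (m : ℕ) : Prop :=
  ∃ f : Fin m → Fin k × V, ∀ v : V, ∃ i : Fin m, MonoConn E χ (f i).1 (f i).2 v

/-- Hamming distance of the component vectors of two vertices: the number of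
colors `c` for which they lie in different monochromatic components of color `c`. -/
noncomputable def HamDist {k : ℕ} (E : Finset V → Prop) (χ : Finset V → Fin k)
    (v w : V) : ℕ :=
  (Finset.univ.filter fun c : Fin k => ¬ MonoConn E χ c v w).card

/-!
Fix a transversal `d` of the partition. For every vertex `v`, replacing `d (part v)` by `v`
gives an edge through `v` and all `d i` with `i ≠ part v`; so in the color of that edge, `v`
is connected to all but at most one of the `d i`. Since `r ≥ 3`, two vertices with this
property for the same color share an anchor `d i`, hence for each color a single component
contains all such vertices, and these `k` components cover `V`.
-/

lemma Fintype.exists_ne_ne_of_three_le_card {ι : Type*} [Fintype ι]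
    (hι : 3 ≤ Fintype.card ι) (j j' : ι) : ∃ i, i ≠ j ∧ i ≠ j' := by
  have hpos : 0 < ((Finset.univ.erase j).erase j').card := by
    have h₁ := Finset.pred_card_le_card_erase (s := Finset.univ.erase j) (a := j')
    have h₂ := Finset.pred_card_le_card_erase (s := (Finset.univ : Finset ι)) (a := j)
    rw [Finset.card_univ] at h₂
    omega
  obtain ⟨i, hi⟩ := Finset.card_pos.1 hpos
  simp only [Finset.mem_erase, Finset.mem_univ, and_true] at hi
  exact ⟨i, hi.2, hi.1⟩

lemma Equivalence.exists_rel_of_rel_all_but_one {R : V → V → Prop} (hR : Equivalence R)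
    {ι : Type*} [Fintype ι] (hι : 3 ≤ Fintype.card ι) (x : ι → V) :
    ∃ p, ∀ v, (∃ j, ∀ i, i ≠ j → R (x i) v) → R p v := by
  by_cases hex : ∃ v₀, ∃ j₀, ∀ i, i ≠ j₀ → R (x i) v₀
  · obtain ⟨v₀, j₀, hv₀⟩ := hex
    refine ⟨v₀, fun v ⟨j, hv⟩ => ?_⟩
    obtain ⟨i, hij₀, hij⟩ := Fintype.exists_ne_ne_of_three_le_card hι j₀ j
    exact hR.trans (hR.symm (hv₀ i hij₀)) (hv i hij)
  · have : Nonempty ι := Fintype.card_pos_iff.1 (by omega)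
    exact ⟨x (Classical.arbitrary ι), fun v hv => (hex ⟨v, hv⟩).elim⟩

namespace MonoConn

variable {k : ℕ} {E : Finset V → Prop} {χ : Finset V → Fin k}

lemma equivalence (c : Fin k) : Equivalence (MonoConn E χ c) := by
  have : Std.Symm fun a b => ∃ e : Finset V, E e ∧ χ e = c ∧ a ∈ e ∧ b ∈ e :=
    ⟨fun _ _ ⟨e, he, hc, ha, hb⟩ => ⟨e, he, hc, hb, ha⟩⟩
  exact ⟨fun _ => Relation.ReflTransGen.refl, fun h => Relation.ReflTransGen.stdSymm.symm _ _ h,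
    Relation.ReflTransGen.trans⟩

lemma of_mem {e : Finset V} (he : E e) {u v : V} (hu : u ∈ e) (hv : v ∈ e) :
    MonoConn E χ (χ e) u v :=
  Relation.ReflTransGen.single ⟨e, he, rfl, hu, hv⟩

end MonoConn

lemma isPartiteEdge_image_of_section {r : ℕ} {part : V → Fin r} {s : Fin r → V}
    (hs : ∀ i, part (s i) = i) : IsPartiteEdge part (Finset.univ.image s) := by
  intro i
  suffices (Finset.univ.image s).filter (fun v => part v = i) = {s i} by
    rw [this, Finset.card_singleton]
  ext v
  simp only [Finset.mem_filter, Finset.mem_image, Finset.mem_univ, true_and,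
    Finset.mem_singleton]
  constructor
  · rintro ⟨⟨j, rfl⟩, rfl⟩
    rw [hs]
  · rintro rfl
    exact ⟨⟨i, rfl⟩, hs i⟩

lemma exists_isPartiteEdge_mem_update {r : ℕ} {part : V → Fin r} {d : Fin r → V}
    (hd : ∀ i, part (d i) = i) (v : V) :
    ∃ e, IsPartiteEdge part e ∧ v ∈ e ∧ ∀ i, i ≠ part v → d i ∈ e := by
  refine ⟨Finset.univ.image (Function.update d (part v) v),
    isPartiteEdge_image_of_section fun i => ?_, ?_, fun i hi => ?_⟩
  · by_cases h : i = part v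
    · subst h; simp
    · simp [h, hd]
  · exact Finset.mem_image.2 ⟨part v, Finset.mem_univ _, by simp⟩
  · exact Finset.mem_image.2 ⟨i, Finset.mem_univ _, Function.update_of_ne hi _ _⟩

theorem stmt_0 {r k : ℕ} (hr : 3 ≤ r) (part : V → Fin r)
    (hne : ∀ i : Fin r, ∃ v, part v = i) (χ : Finset V → Fin k) :
    CoversBy (IsPartiteEdge part) χ k := by
  choose d hd using hne
  have hcard : 3 ≤ Fintype.card (Fin r) := by simpa using hr
  choose p hp using fun c : Fin k =>
    (MonoConn.equivalence (E := IsPartiteEdge part) (χ := χ) c).exists_rel_of_rel_all_but_one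
      hcard d
  refine ⟨fun c => (c, p c), fun v => ?_⟩
  obtain ⟨e, he, hve, hde⟩ := exists_isPartiteEdge_mem_update hd v
  exact ⟨χ e, hp (χ e) v ⟨part v, fun i hi => MonoConn.of_mem he (hde i hi) hve⟩⟩
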